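/- For every α > 48 there are a constant c > 0 depending only on α and an absolute constant d0 ≥ 3 such that for all d ≥ d0, all σ > 0, and all integers s with 1 ≤ s ≤ √(d log d/2): sup_{θ ∈ Θ_s} E_θ[(L̂_s(y) − L(θ))²] ≤ c·Φ^L(σ,s). -/

import Mathlib

open MeasureTheory ProbabilityTheory

/-- Law of `y = θ + σ·ξ` with `ξ` i.i.d. standard normal: the product of Gaussians `N(θ j, σ²)`. -/
noncomputable def gaussMeasure (d : ℕ) (θ : Fin d → ℝ) (σ : ℝ) : Measure (Fin d → ℝ) :=
  Measure.pi fun j => gaussianReal (θ j) (Real.toNNReal (σ ^ 2))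

/-- The sparsity class `Θ_s`: vectors with at most `s` nonzero coordinates. -/
def Theta (d s : ℕ) : Set (Fin d → ℝ) := {θ | {j | θ j ≠ 0}.ncard ≤ s}

/-- The linear functional `L(θ) = ∑ θ_j`. -/
noncomputable def Lfun (d : ℕ) (θ : Fin d → ℝ) : ℝ := ∑ j, θ j

/-- The rate `Φ^L(σ, s) = σ² s² log(1 + d (log d) / s²)`. -/
noncomputable def PhiL (d : ℕ) (σ : ℝ) (s : ℕ) : ℝ :=
  σ ^ 2 * (s : ℝ) ^ 2 * Real.log (1 + (d : ℝ) * Real.log d / (s : ℝ) ^ 2)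

/-- The non-adaptive estimators `L̂_s` (known `σ`). -/
noncomputable def LhatS (d : ℕ) (α σ : ℝ) (s : ℕ) (y : Fin d → ℝ) : ℝ :=
  if (s : ℝ) ≤ Real.sqrt ((d : ℝ) * Real.log d / 2) then
    ∑ j, if α * σ ^ 2 * Real.log (1 + (d : ℝ) * Real.log d / (s : ℝ) ^ 2) < (y j) ^ 2
      then y j else 0
  else ∑ j, y j

open Real Finset
open scoped NNReal

/-!
Write `L̂_s(y) − L(θ) = ∑ⱼ Xⱼ` with `Xⱼ = η_t(yⱼ) − θⱼ`, where `η_t(x) = x·1{x² > t}` is hard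
thresholding at `t = ασ²ℓ`, `ℓ = log(1 + d log d / s²) ≥ 1`. The `Xⱼ` are independent, so
`E(∑ Xⱼ)² = ∑ Var Xⱼ + (∑ E Xⱼ)²`. Off the support of `θ`, `η_t` is odd and `yⱼ` is a centred
Gaussian, so `E Xⱼ = 0` and only the support (at most `s` coordinates) contributes to the bias;
there `E Xⱼ² ≤ 2σ² + 2t`, giving `O(s²(σ² + t))`. Off the support, comparing `x²·1{x² > t}` with
`e^{x²/(4σ²)}`, whose Gaussian mean is `√2`, gives `E η_t(yⱼ)² ≤ 16σ² e^{−t/(8σ²)}`, and since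
`α/8 ≥ 4` these `d` terms add up to at most `σ²s²`.
-/

lemma sq_integral_le_integral_sq {Ω : Type*} {mΩ : MeasurableSpace Ω} {μ : Measure Ω}
    [IsProbabilityMeasure μ] {X : Ω → ℝ} (hX : MemLp X 2 μ) : μ[X] ^ 2 ≤ μ[X ^ 2] := by
  have := variance_nonneg X μ
  rw [variance_eq_sub hX] at this
  linarith

theorem integral_sq_sum_pi_le {ι : Type*} [Fintype ι] {Ω : ι → Type*}
    {mΩ : ∀ i, MeasurableSpace (Ω i)} {μ : (i : ι) → Measure (Ω i)}
    [∀ i, IsProbabilityMeasure (μ i)] {X : Π i, Ω i → ℝ} (hX : ∀ i, MemLp (X i) 2 (μ i))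
    (S : Finset ι) (hcentered : ∀ i ∉ S, (μ i)[X i] = 0) :
    ∫ ω, (∑ i, X i (ω i)) ^ 2 ∂Measure.pi μ
      ≤ ∑ i, (μ i)[X i ^ 2] + (#S : ℝ) * ∑ i ∈ S, (μ i)[X i ^ 2] := by
  set Y : (Π i, Ω i) → ℝ := ∑ i, fun ω ↦ X i (ω i) with hY
  have hYsum : ∀ ω, Y ω = ∑ i, X i (ω i) := fun ω ↦ by simp [hY]
  have hXpi : ∀ i, MemLp (fun ω : Π i, Ω i ↦ X i (ω i)) 2 (Measure.pi μ) :=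
    fun i ↦ (hX i).comp_measurePreserving (measurePreserving_eval μ i)
  have hYmem : MemLp Y 2 (Measure.pi μ) := memLp_finsetSum' _ fun i _ ↦ hXpi i
  have hmean : (Measure.pi μ)[Y] = ∑ i ∈ S, (μ i)[X i] := by
    simp_rw [hYsum]
    rw [integral_finsetSum _ fun i _ ↦ (hXpi i).integrable one_le_two]
    simp_rw [integral_comp_eval (hX _).aestronglyMeasurable]
    exact (sum_subset (subset_univ S) fun i _ hi ↦ hcentered i hi).symm
  have hvar : Var[Y; Measure.pi μ] ≤ ∑ i, (μ i)[X i ^ 2] := by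
    rw [hY, variance_sum_pi hX]
    exact sum_le_sum fun i _ ↦ variance_le_expectation_sq (hX i).aestronglyMeasurable
  have hbias : (∑ i ∈ S, (μ i)[X i]) ^ 2 ≤ (#S : ℝ) * ∑ i ∈ S, (μ i)[X i ^ 2] :=
    sq_sum_le_card_mul_sum_sq.trans <| mul_le_mul_of_nonneg_left
      (sum_le_sum fun i _ ↦ sq_integral_le_integral_sq (hX i)) (Nat.cast_nonneg _)
  have hsecond : (Measure.pi μ)[Y ^ 2] = Var[Y; Measure.pi μ] + (Measure.pi μ)[Y] ^ 2 := by
    rw [variance_eq_sub hYmem]; ring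
  calc ∫ ω, (∑ i, X i (ω i)) ^ 2 ∂Measure.pi μ = (Measure.pi μ)[Y ^ 2] := by simp [hYsum]
    _ ≤ _ := by rw [hsecond, hmean]; exact add_le_add hvar hbias

noncomputable def hardThreshold (t x : ℝ) : ℝ := if t < x ^ 2 then x else 0

lemma measurable_hardThreshold (t : ℝ) : Measurable (hardThreshold t) :=
  Measurable.ite (measurableSet_lt measurable_const (measurable_id.pow_const 2))
    measurable_id measurable_const

lemma abs_hardThreshold_le (t x : ℝ) : |hardThreshold t x| ≤ |x| := by
  unfold hardThreshold; split_ifs <;> simp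

lemma hardThreshold_neg (t x : ℝ) : hardThreshold t (-x) = -hardThreshold t x := by
  unfold hardThreshold; split_ifs <;> simp_all

lemma hardThreshold_sub_sq_le {t : ℝ} (ht : 0 ≤ t) (θ x : ℝ) :
    (hardThreshold t x - θ) ^ 2 ≤ 2 * (x - θ) ^ 2 + 2 * t := by
  unfold hardThreshold
  split_ifs with h
  · nlinarith [sq_nonneg (x - θ)]
  · nlinarith [sq_nonneg (2 * x - θ)]

lemma hardThreshold_sq_le_exp {v : ℝ} (hv : 0 < v) (t x : ℝ) :
    hardThreshold t x ^ 2 ≤ 8 * v * exp (-(t / (8 * v))) * exp (x ^ 2 / (4 * v)) := by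
  unfold hardThreshold
  split_ifs with h
  · have hsplit : 8 * v * exp (-(t / (8 * v))) * exp (x ^ 2 / (4 * v))
        = 8 * v * exp (x ^ 2 / (8 * v)) * exp ((x ^ 2 - t) / (8 * v)) := by
      rw [mul_assoc (8 * v), ← exp_add, mul_assoc (8 * v), ← exp_add]
      congr 2
      field_simp
      ring
    have hlin : x ^ 2 ≤ 8 * v * exp (x ^ 2 / (8 * v)) := by
      have := add_one_le_exp (x ^ 2 / (8 * v))
      rw [div_add_one (by positivity), div_le_iff₀ (by positivity)] at this
      nlinarith
    have hone : 1 ≤ exp ((x ^ 2 - t) / (8 * v)) :=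
      one_le_exp (div_nonneg (by linarith) (by positivity))
    rw [hsplit]
    nlinarith [exp_pos (x ^ 2 / (8 * v))]
  · rw [zero_pow two_ne_zero]; positivity

section GaussianReal

variable {v : ℝ≥0}

lemma integral_exp_sq_div_four_gaussianReal (hv : v ≠ 0) :
    ∫ x, exp (x ^ 2 / (4 * v)) ∂gaussianReal 0 v = √2 := by
  have hv0 : (0 : ℝ) < v := by positivity
  have hpdf : ∀ x, gaussianPDFReal 0 v x • exp (x ^ 2 / (4 * v))
      = (√(2 * π * v))⁻¹ * exp (-(4 * (v : ℝ))⁻¹ * x ^ 2) := fun x ↦ by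
    rw [gaussianPDFReal_def, smul_eq_mul, mul_assoc, ← exp_add]
    congr 2
    field_simp
    ring
  rw [integral_gaussianReal_eq_integral_smul hv]
  simp_rw [hpdf]
  rw [integral_const_mul, integral_gaussian, ← sqrt_inv, ← sqrt_mul (by positivity)]
  congr 1
  field_simp
  ring

lemma integrable_exp_sq_div_four_gaussianReal (hv : v ≠ 0) :
    Integrable (fun x ↦ exp (x ^ 2 / (4 * v))) (gaussianReal 0 v) :=
  Integrable.of_integral_ne_zero <| by simp [integral_exp_sq_div_four_gaussianReal hv]

lemma integral_hardThreshold_sq_gaussianReal_le (hv : v ≠ 0) (t : ℝ) :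
    ∫ x, hardThreshold t x ^ 2 ∂gaussianReal 0 v ≤ 16 * v * exp (-(t / (8 * v))) := by
  have hv0 : (0 : ℝ) < v := by positivity
  calc ∫ x, hardThreshold t x ^ 2 ∂gaussianReal 0 v
      ≤ ∫ x, 8 * v * exp (-(t / (8 * v))) * exp (x ^ 2 / (4 * v)) ∂gaussianReal 0 v :=
        integral_mono_of_nonneg (ae_of_all _ fun x ↦ sq_nonneg _)
          ((integrable_exp_sq_div_four_gaussianReal hv).const_mul _)
          (ae_of_all _ (hardThreshold_sq_le_exp hv0 t))
    _ = 8 * v * exp (-(t / (8 * v))) * √2 := by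
        rw [integral_const_mul, integral_exp_sq_div_four_gaussianReal hv]
    _ ≤ 16 * v * exp (-(t / (8 * v))) := by
        have : √2 ≤ 2 := by rw [sqrt_le_left (by norm_num)]; norm_num
        have hc : 0 ≤ 8 * (v : ℝ) * exp (-(t / (8 * v))) := by positivity
        nlinarith [mul_le_mul_of_nonneg_left this hc]

lemma integral_of_odd_gaussianReal {f : ℝ → ℝ} (hf : ∀ x, f (-x) = -f x) :
    ∫ x, f x ∂gaussianReal 0 v = 0 := by
  have h := integral_map_equiv (MeasurableEquiv.neg ℝ) f (μ := gaussianReal 0 v)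
  simp only [MeasurableEquiv.neg_apply, gaussianReal_map_neg, neg_zero, hf, integral_neg] at h
  linarith

lemma memLp_hardThreshold_sub_gaussianReal (μ θ t : ℝ) :
    MemLp (fun x ↦ hardThreshold t x - θ) 2 (gaussianReal μ v) :=
  ((memLp_id_gaussianReal 2).of_le (measurable_hardThreshold t).aestronglyMeasurable
    (ae_of_all _ fun x ↦ by simpa using abs_hardThreshold_le t x)).sub (memLp_const θ)

lemma integral_hardThreshold_sub_sq_gaussianReal_le {t : ℝ} (ht : 0 ≤ t) (θ : ℝ) :
    ∫ x, (hardThreshold t x - θ) ^ 2 ∂gaussianReal θ v ≤ 2 * v + 2 * t := by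
  have hsq : MemLp (fun x ↦ x - θ) 2 (gaussianReal θ v) :=
    (memLp_id_gaussianReal 2).sub (memLp_const θ)
  have hvar : ∫ x, (x - θ) ^ 2 ∂gaussianReal θ v = v := by
    rw [← variance_id_gaussianReal (μ := θ) (v := v), variance_eq_integral aemeasurable_id]
    simp [integral_id_gaussianReal]
  calc ∫ x, (hardThreshold t x - θ) ^ 2 ∂gaussianReal θ v
      ≤ ∫ x, (2 * (x - θ) ^ 2 + 2 * t) ∂gaussianReal θ v :=
        integral_mono_of_nonneg (ae_of_all _ fun x ↦ sq_nonneg _)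
          ((hsq.integrable_sq.const_mul 2).add (integrable_const _))
          (ae_of_all _ (hardThreshold_sub_sq_le ht θ))
    _ = 2 * v + 2 * t := by
        rw [integral_add (hsq.integrable_sq.const_mul 2) (integrable_const _), integral_const_mul,
          hvar]
        simp

end GaussianReal

lemma one_lt_log_of_three_le {x : ℝ} (hx : 3 ≤ x) : 1 < log x := by
  rw [lt_log_iff_exp_lt (by linarith)]
  linarith [exp_one_lt_d9]

lemma mul_exp_neg_mul_log_le {d s a : ℝ} (hd : 3 ≤ d) (hs : 0 < s)
    (hsd : 2 * s ^ 2 ≤ d * log d) (ha : 4 ≤ a) :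
    16 * d * exp (-(a * log (1 + d * log d / s ^ 2))) ≤ s ^ 2 := by
  set R := d * log d / s ^ 2 with hR
  have hlog : 1 < log d := one_lt_log_of_three_le hd
  have hR2 : 2 ≤ R := by rw [hR, le_div_iff₀ (by positivity)]; linarith
  have hsR : s ^ 2 * R = d * log d := by rw [hR]; field_simp
  have hpow : (1 + R) ^ 4 ≤ exp (a * log (1 + R)) := by
    rw [← exp_log (by linarith : (0 : ℝ) < 1 + R), ← exp_nat_mul, log_exp, exp_le_exp]
    exact mul_le_mul_of_nonneg_right (by exact_mod_cast ha) (log_nonneg (by linarith))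
  have hR4 : 27 * R ≤ (1 + R) ^ 4 := by nlinarith [sq_nonneg R, sq_nonneg (R - 2)]
  rw [exp_neg, ← div_eq_mul_inv, div_le_iff₀ (exp_pos _)]
  nlinarith [mul_le_mul_of_nonneg_left (hR4.trans hpow) (sq_nonneg s)]

lemma integral_sq_sum_hardThreshold_sub_le {d s : ℕ} {θ : Fin d → ℝ} (hθ : θ ∈ Theta d s)
    {v : ℝ≥0} (hv : v ≠ 0) {t : ℝ} (ht : 0 ≤ t) :
    ∫ y, (∑ j, (hardThreshold t (y j) - θ j)) ^ 2 ∂Measure.pi (fun j ↦ gaussianReal (θ j) v)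
      ≤ d * (16 * v * exp (-(t / (8 * v)))) + (s + s ^ 2) * (2 * v + 2 * t) := by
  classical
  set S := univ.filter fun j ↦ θ j ≠ 0
  have hS : #S ≤ s := by simpa [Theta, ← Set.ncard_coe_finset, S] using hθ
  have hzero : ∀ j ∉ S, θ j = 0 := by simp [S]
  have hX := fun j ↦ memLp_hardThreshold_sub_gaussianReal (v := v) (θ j) (θ j) t
  refine (integral_sq_sum_pi_le hX S fun j hj ↦ ?_).trans ?_
  · simp only [hzero j hj, sub_zero]
    exact integral_of_odd_gaussianReal (hardThreshold_neg t)
  set B := 16 * (v : ℝ) * exp (-(t / (8 * v)))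
  set C := 2 * (v : ℝ) + 2 * t
  have hC : ∀ j, ∫ x, (hardThreshold t x - θ j) ^ 2 ∂gaussianReal (θ j) v ≤ C :=
    fun j ↦ integral_hardThreshold_sub_sq_gaussianReal_le ht (θ j)
  have hB : ∀ j ∉ S, ∫ x, (hardThreshold t x - θ j) ^ 2 ∂gaussianReal (θ j) v ≤ B := by
    intro j hj
    simpa [hzero j hj] using integral_hardThreshold_sq_gaussianReal_le hv t
  have hsumS : ∑ j ∈ S, ∫ x, (hardThreshold t x - θ j) ^ 2 ∂gaussianReal (θ j) v ≤ #S * C := by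
    simpa using sum_le_card_nsmul S _ C fun j _ ↦ hC j
  have hsumSc : ∑ j ∈ Sᶜ, ∫ x, (hardThreshold t x - θ j) ^ 2 ∂gaussianReal (θ j) v ≤ d * B :=
    calc _ ≤ #Sᶜ * B := by simpa using sum_le_card_nsmul Sᶜ _ B fun j hj ↦ hB j (mem_compl.1 hj)
      _ ≤ d * B := by
        gcongr
        exact_mod_cast (card_le_univ Sᶜ).trans (by simp)
  have hSs : (#S : ℝ) ≤ s := by exact_mod_cast hS
  have hC0 : 0 ≤ C := by positivity
  simp only [Pi.pow_apply]
  rw [← sum_add_sum_compl S]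
  nlinarith [mul_le_mul_of_nonneg_left hsumS (Nat.cast_nonneg #S), mul_le_mul hSs hSs
    (Nat.cast_nonneg _) (Nat.cast_nonneg _)]

lemma memLp_sum_hardThreshold_sub {d : ℕ} (θ : Fin d → ℝ) (σ t : ℝ) :
    MemLp (fun y : Fin d → ℝ ↦ ∑ j, (hardThreshold t (y j) - θ j)) 2 (gaussMeasure d θ σ) :=
  memLp_finsetSum _ fun j _ ↦ (memLp_hardThreshold_sub_gaussianReal (θ j) (θ j) t
    ).comp_measurePreserving (measurePreserving_eval _ j)

lemma integral_sq_sum_hardThreshold_sub_le_PhiL {d s : ℕ} {α σ : ℝ} (hd : 3 ≤ d) (hs : 1 ≤ s)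
    (hsd : 2 * (s : ℝ) ^ 2 ≤ d * log d) (hα : 32 ≤ α) (hσ : σ ≠ 0) {θ : Fin d → ℝ}
    (hθ : θ ∈ Theta d s) :
    ∫ y, (∑ j, (hardThreshold (α * σ ^ 2 * log (1 + d * log d / s ^ 2)) (y j) - θ j)) ^ 2
      ∂gaussMeasure d θ σ ≤ (4 * α + 5) * PhiL d σ s := by
  set ℓ := log (1 + d * log d / s ^ 2)
  set t := α * σ ^ 2 * ℓ
  have hv : ((σ ^ 2).toNNReal : ℝ) = σ ^ 2 := Real.coe_toNNReal _ (sq_nonneg σ)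
  have hd3 : (3 : ℝ) ≤ d := by exact_mod_cast hd
  have hs1 : (1 : ℝ) ≤ s := by exact_mod_cast hs
  have hℓ : 1 ≤ ℓ := by
    have : 2 ≤ d * log d / (s : ℝ) ^ 2 := by rw [le_div_iff₀ (by positivity)]; linarith
    exact (one_lt_log_of_three_le (by linarith)).le
  have hoff : 16 * d * exp (-(t / (8 * σ ^ 2))) ≤ s ^ 2 := by
    have : t / (8 * σ ^ 2) = α / 8 * ℓ := by
      change α * σ ^ 2 * ℓ / (8 * σ ^ 2) = _
      field_simp
    rw [this]
    exact mul_exp_neg_mul_log_le hd3 (by positivity) hsd (by linarith)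
  refine (integral_sq_sum_hardThreshold_sub_le hθ (by simpa using hσ) (by positivity)).trans ?_
  have hss : (s : ℝ) + s ^ 2 ≤ 2 * s ^ 2 := by nlinarith
  change _ ≤ (4 * α + 5) * (σ ^ 2 * s ^ 2 * ℓ)
  rw [hv]
  nlinarith [mul_le_mul_of_nonneg_left hoff (sq_nonneg σ), mul_le_mul_of_nonneg_right hss
    (by positivity : (0 : ℝ) ≤ 2 * σ ^ 2 + 2 * t),
    mul_le_mul_of_nonneg_left hℓ (by positivity : (0 : ℝ) ≤ σ ^ 2 * s ^ 2)]

lemma LhatS_sub_Lfun {d s : ℕ} {α σ : ℝ} (hs : (s : ℝ) ≤ √(d * log d / 2))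
    (θ y : Fin d → ℝ) :
    LhatS d α σ s y - Lfun d θ
      = ∑ j, (hardThreshold (α * σ ^ 2 * log (1 + d * log d / s ^ 2)) (y j) - θ j) := by
  rw [LhatS, if_pos hs, Lfun, ← sum_sub_distrib]
  rfl

/-- Lemma 5 (first bound): for `α > 48` and all `s ≤ √(d log d / 2)`,
`E_θ (L̂_s - L)² ≤ c Φ^L(σ, s)` uniformly over `Θ_s`. -/
theorem second_moment_LhatS :
    ∀ α : ℝ, 48 < α → ∃ c : ℝ, 0 < c ∧ ∃ d0 : ℕ, 3 ≤ d0 ∧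
      ∀ d : ℕ, d0 ≤ d → ∀ σ : ℝ, 0 < σ →
        ∀ s : ℕ, 1 ≤ s → (s : ℝ) ≤ Real.sqrt ((d : ℝ) * Real.log d / 2) →
          ∀ θ ∈ Theta d s,
            ∫⁻ y, ENNReal.ofReal ((LhatS d α σ s y - Lfun d θ) ^ 2) ∂(gaussMeasure d θ σ)
              ≤ ENNReal.ofReal (c * PhiL d σ s) := by
  intro α hα
  refine ⟨4 * α + 5, by linarith, 3, le_rfl, fun d hd σ hσ s hs1 hs θ hθ ↦ ?_⟩
  have hsd : 2 * (s : ℝ) ^ 2 ≤ d * log d := by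
    have := (le_sqrt (Nat.cast_nonneg s) (by positivity)).1 hs
    linarith
  simp_rw [LhatS_sub_Lfun hs θ]
  rw [← ofReal_integral_eq_lintegral_ofReal (memLp_sum_hardThreshold_sub θ _ _).integrable_sq
    (ae_of_all _ fun _ ↦ sq_nonneg _)]
  exact ENNReal.ofReal_le_ofReal
    (integral_sq_sum_hardThreshold_sub_le_PhiL hd hs1 hsd (by linarith) hσ.ne' hθ)
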